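/- For every real m ≥ 2, ∑_{k=0}^∞ ∑_{n=1}^∞ [(k+1)(k+2)(k+3)/(1+mn)⁴] · ((m−1)n/(1+mn))^k = 6(ζ(4) − 1) = (π⁴ − 90)/15, where ζ(s) = ∑_{n=1}^∞ n^{−s} is the Riemann zeta function. -/

import Mathlib

/-!
Sum over `k` first: with `x = (m - 1) t / (1 + m t)` the series `∑ (k+1)(k+2)(k+3) xᵏ` is
`6 / (1 - x)⁴`, and `1 - x = (1 + t) / (1 + m t)`, so the factor `(1 + m t)⁻⁴` cancels and the
column `t = n + 1` contributes `6 / (n + 2)⁴`. For `m ≥ 1` all terms are nonnegative, so the two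
summations may be interchanged, and `∑ₙ 6 / (n + 2)⁴ = 6 (ζ(4) - 1)` with `ζ(4) = π⁴ / 90`.
-/

open Real

theorem Nat.six_mul_choose_three (k : ℕ) : 6 * (k + 3).choose 3 = (k + 1) * (k + 2) * (k + 3) := by
  have h := Nat.descFactorial_eq_factorial_mul_choose (k + 3) 3
  rw [Nat.add_descFactorial_eq_ascFactorial] at h
  simp only [Nat.ascFactorial_succ, Nat.ascFactorial_zero, Nat.factorial_succ, Nat.factorial_zero,
    add_zero, mul_one] at h
  linarith

theorem hasSum_cubic_mul_geometric {𝕜 : Type*} [NormedDivisionRing 𝕜] {x : 𝕜} (hx : ‖x‖ < 1) :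
    HasSum (fun k : ℕ => ((k : 𝕜) + 1) * ((k : 𝕜) + 2) * ((k : 𝕜) + 3) * x ^ k)
      (6 / (1 - x) ^ 4) := by
  have h := (hasSum_choose_mul_geometric_of_norm_lt_one 3 hx).mul_left 6
  rw [mul_one_div] at h
  refine h.congr_fun fun k => ?_
  rw [← mul_assoc]
  congr 1
  have h6 := congrArg (Nat.cast (R := 𝕜)) (Nat.six_mul_choose_three k)
  push_cast at h6
  exact h6.symm

/-- The `(k, n)` summand of the double series, with the real variable `t` in place of `n`. -/
noncomputable def mathieuTerm (m t : ℝ) (k : ℕ) : ℝ :=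
  ((k : ℝ) + 1) * ((k : ℝ) + 2) * ((k : ℝ) + 3) / (1 + m * t) ^ 4 * ((m - 1) * t / (1 + m * t)) ^ k

theorem mathieuTerm_nonneg {m t : ℝ} (hm : 1 ≤ m) (ht : 0 ≤ t) (k : ℕ) : 0 ≤ mathieuTerm m t k := by
  have : 0 ≤ m - 1 := by linarith
  have : 0 ≤ m * t := by positivity
  unfold mathieuTerm
  positivity

theorem hasSum_mathieuTerm {m t : ℝ} (hm : 1 ≤ m) (ht : 0 ≤ t) :
    HasSum (mathieuTerm m t) (6 / (1 + t) ^ 4) := by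
  have hmt : 0 < 1 + m * t := by nlinarith
  have hx : ‖(m - 1) * t / (1 + m * t)‖ < 1 := by
    rw [Real.norm_eq_abs, abs_lt, lt_div_iff₀ hmt, div_lt_one hmt]
    constructor <;> nlinarith
  have h1x : 1 - (m - 1) * t / (1 + m * t) = (1 + t) / (1 + m * t) := by
    field_simp; ring
  have h := (hasSum_cubic_mul_geometric hx).div_const ((1 + m * t) ^ 4)
  have hval : 6 / (1 - (m - 1) * t / (1 + m * t)) ^ 4 / (1 + m * t) ^ 4 = 6 / (1 + t) ^ 4 := by
    rw [h1x]
    field_simp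
  rw [hval] at h
  exact h.congr_fun fun k => by unfold mathieuTerm; ring

theorem tsum_tsum_eq_of_nonneg_of_hasSum {β γ : Type*} {f : β → γ → ℝ} {g : γ → ℝ} {a : ℝ}
    (hf : ∀ b c, 0 ≤ f b c) (hcol : ∀ c, HasSum (fun b => f b c) (g c)) (hg : HasSum g a) :
    ∑' b, ∑' c, f b c = a := by
  have hsum : Summable (Function.uncurry fun c b => f b c) := by
    refine (summable_prod_of_nonneg fun p => hf p.2 p.1).mpr ⟨fun c => (hcol c).summable, ?_⟩
    simpa only [Function.uncurry_apply_pair, (hcol _).tsum_eq] using hg.summable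
  rw [hsum.tsum_comm]
  simpa only [(hcol _).tsum_eq] using hg.tsum_eq

theorem hasSum_one_div_add_one_pow_four :
    HasSum (fun n : ℕ => 1 / ((n : ℝ) + 1) ^ 4) (π ^ 4 / 90) := by
  simpa using (hasSum_nat_add_iff' 1).mpr hasSum_zeta_four

theorem hasSum_one_div_add_two_pow_four :
    HasSum (fun n : ℕ => 1 / ((n : ℝ) + 2) ^ 4) (π ^ 4 / 90 - 1) := by
  have h := (hasSum_nat_add_iff' 1).mpr hasSum_one_div_add_one_pow_four
  simpa [add_assoc, one_add_one_eq_two] using h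

/-- `∑_{k≥0} ∑_{n≥1} (k+1)(k+2)(k+3)/(1+mn)⁴ ((m-1)n/(1+mn))ᵏ = 6(ζ(4)-1) = (π⁴-90)/15`
for every real `m ≥ 2`, where `ζ(s) = ∑_{n≥1} n^{-s}`. -/
theorem double_series_identity_zeta_four
    (m : ℝ) (hm : 2 ≤ m) :
    (∑' k : ℕ, ∑' n : ℕ,
        ((k : ℝ) + 1) * ((k : ℝ) + 2) * ((k : ℝ) + 3) / (1 + m * ((n : ℝ) + 1)) ^ 4 *
          ((m - 1) * ((n : ℝ) + 1) / (1 + m * ((n : ℝ) + 1))) ^ k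
      = 6 * ((∑' n : ℕ, 1 / ((n : ℝ) + 1) ^ 4) - 1)) ∧
    (6 * ((∑' n : ℕ, 1 / ((n : ℝ) + 1) ^ 4) - 1) = (Real.pi ^ 4 - 90) / 15) := by
  rw [hasSum_one_div_add_one_pow_four.tsum_eq]
  refine ⟨?_, by ring⟩
  have hm1 : 1 ≤ m := by linarith
  have hcol (n : ℕ) :
      HasSum (fun k => mathieuTerm m ((n : ℝ) + 1) k) (6 * (1 / ((n : ℝ) + 2) ^ 4)) := by
    have h := hasSum_mathieuTerm hm1 (t := (n : ℝ) + 1) (by positivity)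
    rwa [show 1 + ((n : ℝ) + 1) = n + 2 by ring, ← mul_one_div] at h
  exact tsum_tsum_eq_of_nonneg_of_hasSum (fun k n => mathieuTerm_nonneg hm1 (by positivity) k)
    hcol (hasSum_one_div_add_two_pow_four.mul_left 6)
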